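/- Let E and F be Banach spaces and let ε, σ_s, β, R be real numbers with 0 < ε < 1, σ_s > 0, β > 0, R > 0. Let K₁ : E → E, K₂ : F → E, K₃ : F → F, K₄ : E → F be continuous linear operators satisfying ‖K₁‖ ≤ 1 − ε, ‖K₂‖ ≤ ε σ_s/(4β), ‖K₃‖ ≤ (σ_s/β)(1 − exp(−βR)), ‖K₄‖ ≤ 4(1 − ε)/ε, and assume (σ_s/β)(1/ε − exp(−βR)) < 1. Fix f ∈ E and g ∈ F, and define sequences (qⁿ) in E and (Gⁿ) in F by: G⁰ ∈ F arbitrary, qⁿ is the unique solution of qⁿ = K₁ qⁿ + K₂ Gⁿ + f (which exists since ‖K₁‖ < 1), and G^{n+1} = K₃ Gⁿ + K₄ qⁿ + g. Then the operator T = K₃ + K₄ ∘ (I − K₁)⁻¹ ∘ K₂ satisfies ‖T‖ < 1, and the sequence (Gⁿ) converges in F to the unique G* ∈ F satisfying G* = T G* + g̃ with g̃ = K₄ (I − K₁)⁻¹ f + g, while (qⁿ) converges to q* = (I − K₁)⁻¹(K₂ G* + f). -/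

import Mathlib

/-!
Eliminating `q` from scheme (14) through `q = (I - K₁)⁻¹ (K₂ G + f)` turns it into the affine
iteration `Gⁿ⁺¹ = T Gⁿ + g̃` with `T = K₃ + K₄ (I - K₁)⁻¹ K₂`. The Neumann series gives
`‖(I - K₁)⁻¹‖ ≤ (1 - ‖K₁‖)⁻¹ ≤ ε⁻¹`, so `‖T‖ ≤ (σs/β)(1 - e^{-βR}) + (1 - ε)σs/(εβ) =
(σs/β)(1/ε - e^{-βR}) < 1`, and the Banach fixed point theorem applies to `G ↦ T G + g̃`;
`qⁿ` then converges by continuity of `(I - K₁)⁻¹`.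
-/

open Filter

theorem Units.norm_inv_oneSub_le {R : Type*} [NormedRing R] [HasSummableGeomSeries R]
    (t : R) (h : ‖t‖ < 1) (h1 : ‖(1 : R)‖ ≤ 1) :
    ‖(↑(Units.oneSub t h)⁻¹ : R)‖ ≤ (1 - ‖t‖)⁻¹ :=
  (tsum_geometric_le_of_norm_lt_one t h).trans (by linarith)

namespace ContinuousLinearMap

variable {𝕜 E F : Type*} [NontriviallyNormedField 𝕜]
  [NormedAddCommGroup E] [NormedSpace 𝕜 E] [NormedAddCommGroup F] [NormedSpace 𝕜 F]

theorem norm_add_comp_comp_le (A : F →L[𝕜] F) (B : E →L[𝕜] F) (S : E →L[𝕜] E)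
    (C : F →L[𝕜] E) : ‖A + B.comp (S.comp C)‖ ≤ ‖A‖ + ‖B‖ * (‖S‖ * ‖C‖) :=
  calc ‖A + B.comp (S.comp C)‖ ≤ ‖A‖ + ‖B.comp (S.comp C)‖ := norm_add_le _ _
    _ ≤ ‖A‖ + ‖B‖ * ‖S.comp C‖ := by gcongr; exact opNorm_comp_le _ _
    _ ≤ ‖A‖ + ‖B‖ * (‖S‖ * ‖C‖) := by gcongr; exact opNorm_comp_le _ _

theorem eq_inv_oneSub_apply_of_eq_add [CompleteSpace E] {K : E →L[𝕜] E} (hK : ‖K‖ < 1)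
    {x y : E} (hx : x = K x + y) : x = (↑(Units.oneSub K hK)⁻¹ : E →L[𝕜] E) y := by
  set u := Units.oneSub K hK
  have hux : (u : E →L[𝕜] E) x = y := sub_eq_iff_eq_add'.mpr hx
  calc x = (↑u⁻¹ * ↑u : E →L[𝕜] E) x := by rw [u.inv_mul, one_apply_eq_self]
    _ = (↑u⁻¹ : E →L[𝕜] E) y := by rw [mul_apply_eq_comp, hux]

theorem contractingWith_add_const (T : E →L[𝕜] E) (hT : ‖T‖ < 1) (c : E) :
    ContractingWith ‖T‖₊ (fun x ↦ T x + c) :=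
  ⟨by exact_mod_cast hT, LipschitzWith.of_dist_le_mul fun x y ↦ by
    rw [dist_add_right]; exact T.lipschitz.dist_le_mul x y⟩

variable [CompleteSpace E]

theorem existsUnique_eq_apply_add (T : E →L[𝕜] E) (hT : ‖T‖ < 1) (c : E) :
    ∃! x : E, x = T x + c :=
  let hf := T.contractingWith_add_const hT c
  ⟨ContractingWith.fixedPoint _ hf, (ContractingWith.fixedPoint_isFixedPt hf).symm,
    fun _ hy ↦ hf.fixedPoint_unique hy.symm⟩

theorem tendsto_of_eq_apply_add {T : E →L[𝕜] E} (hT : ‖T‖ < 1) {c x : E} {G : ℕ → E}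
    (hG : ∀ n, G (n + 1) = T (G n) + c) (hx : x = T x + c) : Tendsto G atTop (nhds x) := by
  let hf := T.contractingWith_add_const hT c
  have hiter : G = fun n ↦ (fun y ↦ T y + c)^[n] (G 0) := by
    funext n
    induction n with
    | zero => rfl
    | succ n ih => rw [hG, ih, Function.iterate_succ_apply']
  rw [hiter, hf.fixedPoint_unique hx.symm]
  exact hf.tendsto_iterate_fixedPoint _

end ContinuousLinearMap

theorem radiative_norm_estimate {ε σs β e a b s c : ℝ} (hε0 : 0 < ε)
    (ha : a ≤ (σs / β) * (1 - e)) (hb0 : 0 ≤ b) (hb : b ≤ 4 * (1 - ε) / ε)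
    (hs0 : 0 ≤ s) (hs : s ≤ ε⁻¹) (hc0 : 0 ≤ c) (hc : c ≤ ε * σs / (4 * β)) :
    a + b * (s * c) ≤ (σs / β) * (1 / ε - e) := by
  have : 0 ≤ 4 * (1 - ε) / ε := hb0.trans hb
  calc a + b * (s * c) ≤ (σs / β) * (1 - e) + 4 * (1 - ε) / ε * (ε⁻¹ * (ε * σs / (4 * β))) := by
        gcongr
    _ = (σs / β) * (1 / ε - e) := by
        field_simp
        ring

theorem stmt_4_general {E F : Type*} [NormedAddCommGroup E] [NormedSpace ℝ E] [CompleteSpace E]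
    [NormedAddCommGroup F] [NormedSpace ℝ F] [CompleteSpace F]
    (ε σs β R : ℝ) (hε0 : 0 < ε)
    (K₁ : E →L[ℝ] E) (K₂ : F →L[ℝ] E) (K₃ : F →L[ℝ] F) (K₄ : E →L[ℝ] F)
    (hK₁ : ‖K₁‖ ≤ 1 - ε)
    (hK₂ : ‖K₂‖ ≤ ε * σs / (4 * β))
    (hK₃ : ‖K₃‖ ≤ (σs / β) * (1 - Real.exp (-β * R)))
    (hK₄ : ‖K₄‖ ≤ 4 * (1 - ε) / ε)
    (hcond : (σs / β) * (1 / ε - Real.exp (-β * R)) < 1)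
    (f : E) (g : F) (q : ℕ → E) (G : ℕ → F)
    (hq : ∀ n, q n = K₁ (q n) + K₂ (G n) + f)
    (hG : ∀ n, G (n + 1) = K₃ (G n) + K₄ (q n) + g) :
    ∀ h₁ : ‖K₁‖ < 1,
      ‖K₃ + K₄.comp ((↑(Units.oneSub K₁ h₁)⁻¹ : E →L[ℝ] E).comp K₂)‖ < 1 ∧
      (∃! Gs : F, Gs = (K₃ + K₄.comp ((↑(Units.oneSub K₁ h₁)⁻¹ : E →L[ℝ] E).comp K₂)) Gs +
          (K₄ ((↑(Units.oneSub K₁ h₁)⁻¹ : E →L[ℝ] E) f) + g)) ∧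
      ∀ Gs : F, Gs = (K₃ + K₄.comp ((↑(Units.oneSub K₁ h₁)⁻¹ : E →L[ℝ] E).comp K₂)) Gs +
          (K₄ ((↑(Units.oneSub K₁ h₁)⁻¹ : E →L[ℝ] E) f) + g) →
        Tendsto G atTop (nhds Gs) ∧
        Tendsto q atTop (nhds ((↑(Units.oneSub K₁ h₁)⁻¹ : E →L[ℝ] E) (K₂ Gs + f))) := by
  intro h₁
  set S : E →L[ℝ] E := ↑(Units.oneSub K₁ h₁)⁻¹
  set T : F →L[ℝ] F := K₃ + K₄.comp (S.comp K₂)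
  have hS : ‖S‖ ≤ ε⁻¹ := (Units.norm_inv_oneSub_le K₁ h₁ ContinuousLinearMap.norm_id_le).trans
    (inv_anti₀ hε0 (by linarith))
  have hT : ‖T‖ < 1 := (ContinuousLinearMap.norm_add_comp_comp_le K₃ K₄ S K₂).trans_lt <|
    (radiative_norm_estimate hε0 hK₃ (norm_nonneg _) hK₄ (norm_nonneg _) hS (norm_nonneg _) hK₂).trans_lt
      hcond
  refine ⟨hT, T.existsUnique_eq_apply_add hT _, fun Gs hGs ↦ ?_⟩
  have hqS : ∀ n, q n = S (K₂ (G n) + f) := fun n ↦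
    ContinuousLinearMap.eq_inv_oneSub_apply_of_eq_add h₁ ((hq n).trans (add_assoc _ _ _))
  have hGT : ∀ n, G (n + 1) = T (G n) + (K₄ (S f) + g) := fun n ↦ by
    rw [hG n, hqS n]
    simp only [T, add_apply, ContinuousLinearMap.comp_apply, map_add]
    abel
  have hGlim := ContinuousLinearMap.tendsto_of_eq_apply_add hT hGT hGs
  refine ⟨hGlim, ?_⟩
  rw [funext hqS]
  exact (S.continuous.tendsto _).comp (((K₂.continuous.tendsto Gs).comp hGlim).add_const f)

/-- Quantitative form of the paper's Corollary 2: under the norm bounds of Corollary 1 and the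
condition `(σs/β)(1/ε - exp(-βR)) < 1`, the iteration operator
`T = K₃ + K₄ (I - K₁)⁻¹ K₂` is a contraction (`‖T‖ < 1`), the iterates `Gⁿ` of scheme (14)
converge to the unique fixed point `G* = T G* + g̃` with `g̃ = K₄ (I - K₁)⁻¹ f + g`, and the
iterates `qⁿ` converge to `q* = (I - K₁)⁻¹ (K₂ G* + f)`. -/
theorem stmt_4 {E F : Type*} [NormedAddCommGroup E] [NormedSpace ℝ E] [CompleteSpace E]
    [NormedAddCommGroup F] [NormedSpace ℝ F] [CompleteSpace F]
    (ε σs β R : ℝ) (hε0 : 0 < ε) (hε1 : ε < 1) (hσs : 0 < σs) (hβ : 0 < β) (hR : 0 < R)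
    (K₁ : E →L[ℝ] E) (K₂ : F →L[ℝ] E) (K₃ : F →L[ℝ] F) (K₄ : E →L[ℝ] F)
    (hK₁ : ‖K₁‖ ≤ 1 - ε)
    (hK₂ : ‖K₂‖ ≤ ε * σs / (4 * β))
    (hK₃ : ‖K₃‖ ≤ (σs / β) * (1 - Real.exp (-β * R)))
    (hK₄ : ‖K₄‖ ≤ 4 * (1 - ε) / ε)
    (hcond : (σs / β) * (1 / ε - Real.exp (-β * R)) < 1)
    (f : E) (g : F) (q : ℕ → E) (G : ℕ → F)
    (hq : ∀ n, q n = K₁ (q n) + K₂ (G n) + f)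
    (hG : ∀ n, G (n + 1) = K₃ (G n) + K₄ (q n) + g) :
    ∀ h₁ : ‖K₁‖ < 1,
      ‖K₃ + K₄.comp ((↑(Units.oneSub K₁ h₁)⁻¹ : E →L[ℝ] E).comp K₂)‖ < 1 ∧
      (∃! Gs : F, Gs = (K₃ + K₄.comp ((↑(Units.oneSub K₁ h₁)⁻¹ : E →L[ℝ] E).comp K₂)) Gs +
          (K₄ ((↑(Units.oneSub K₁ h₁)⁻¹ : E →L[ℝ] E) f) + g)) ∧
      ∀ Gs : F, Gs = (K₃ + K₄.comp ((↑(Units.oneSub K₁ h₁)⁻¹ : E →L[ℝ] E).comp K₂)) Gs +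
          (K₄ ((↑(Units.oneSub K₁ h₁)⁻¹ : E →L[ℝ] E) f) + g) →
        Tendsto G atTop (nhds Gs) ∧
        Tendsto q atTop (nhds ((↑(Units.oneSub K₁ h₁)⁻¹ : E →L[ℝ] E) (K₂ Gs + f))) :=
  stmt_4_general ε σs β R hε0 K₁ K₂ K₃ K₄ hK₁ hK₂ hK₃ hK₄ hcond f g q G hq hG
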